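/- arXiv:2101.10310 — 2 statements merged into one kernel-verified Lean document; each statement's English description precedes it below -/
import Mathlib

section
/- Let H₀, H₁, …, H₈ be real inner product spaces with H₈ = {0} allowed or not, and for each k let d : H_k → H_{k+1} and δ : H_k → H_{k-1} be linear maps (with H_{-1} = H₉ = {0}) satisfying ⟨d x, y⟩ = ⟨x, δ y⟩ for all x ∈ H_k, y ∈ H_{k+1}, d∘d = 0 and δ∘δ = 0. Suppose given α_k ∈ H_k for k ∈ {1,3,5,7} (with α_{-1} := 0, α₉ := 0) and β_k ∈ H_k for k ∈ {0,2,4,6,8} satisfying (k-4)β_k = d α_{k-1} + δ α_{k+1} for all even k ∈ {0,…,8} and (3-k)α_k = d β_{k-1} + δ β_{k+1} for all odd k ∈ {1,…,7}. Then α₁ = α₅ = α₇ = 0, β₀ = β₂ = β₆ = β₈ = 0, and α₃ and β₄ satisfy d α₃ = 0, δ α₃ = 0, d β₄ = 0, δ β₄ = 0. -/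
open RealInnerProductSpace

/-- Algebraic core of Lemma "even forms at -4": closed and coclosed even-degree
forms homogeneous of rate -4 on a Spin(7)-cone.  `H_k` models `Ω^k(Σ)`, `d` the
exterior derivative, `δ` the codifferential (adjoint of `d`), and the system
`(k-4)β_k = dα_{k-1} + δα_{k+1}` (k even), `(3-k)α_k = dβ_{k-1} + δβ_{k+1}` (k odd)
comes from the closed-and-coclosed conditions.  Conclusion: everything vanishes
except `α₃`, `β₄`, which are closed and coclosed (harmonic). -/
theorem stmt_8
    {H0 H1 H2 H3 H4 H5 H6 H7 H8 : Type*}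
    [NormedAddCommGroup H0] [InnerProductSpace ℝ H0]
    [NormedAddCommGroup H1] [InnerProductSpace ℝ H1]
    [NormedAddCommGroup H2] [InnerProductSpace ℝ H2]
    [NormedAddCommGroup H3] [InnerProductSpace ℝ H3]
    [NormedAddCommGroup H4] [InnerProductSpace ℝ H4]
    [NormedAddCommGroup H5] [InnerProductSpace ℝ H5]
    [NormedAddCommGroup H6] [InnerProductSpace ℝ H6]
    [NormedAddCommGroup H7] [InnerProductSpace ℝ H7]
    [NormedAddCommGroup H8] [InnerProductSpace ℝ H8]
    (d0 : H0 →ₗ[ℝ] H1) (d1 : H1 →ₗ[ℝ] H2) (d2 : H2 →ₗ[ℝ] H3) (d3 : H3 →ₗ[ℝ] H4)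
    (d4 : H4 →ₗ[ℝ] H5) (d5 : H5 →ₗ[ℝ] H6) (d6 : H6 →ₗ[ℝ] H7) (d7 : H7 →ₗ[ℝ] H8)
    (δ1 : H1 →ₗ[ℝ] H0) (δ2 : H2 →ₗ[ℝ] H1) (δ3 : H3 →ₗ[ℝ] H2) (δ4 : H4 →ₗ[ℝ] H3)
    (δ5 : H5 →ₗ[ℝ] H4) (δ6 : H6 →ₗ[ℝ] H5) (δ7 : H7 →ₗ[ℝ] H6) (δ8 : H8 →ₗ[ℝ] H7)
    (hadj0 : ∀ (x : H0) (y : H1), ⟪d0 x, y⟫ = ⟪x, δ1 y⟫)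
    (hadj1 : ∀ (x : H1) (y : H2), ⟪d1 x, y⟫ = ⟪x, δ2 y⟫)
    (hadj2 : ∀ (x : H2) (y : H3), ⟪d2 x, y⟫ = ⟪x, δ3 y⟫)
    (hadj3 : ∀ (x : H3) (y : H4), ⟪d3 x, y⟫ = ⟪x, δ4 y⟫)
    (hadj4 : ∀ (x : H4) (y : H5), ⟪d4 x, y⟫ = ⟪x, δ5 y⟫)
    (hadj5 : ∀ (x : H5) (y : H6), ⟪d5 x, y⟫ = ⟪x, δ6 y⟫)
    (hadj6 : ∀ (x : H6) (y : H7), ⟪d6 x, y⟫ = ⟪x, δ7 y⟫)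
    (hadj7 : ∀ (x : H7) (y : H8), ⟪d7 x, y⟫ = ⟪x, δ8 y⟫)
    (hdd1 : ∀ x : H0, d1 (d0 x) = 0) (hdd2 : ∀ x : H1, d2 (d1 x) = 0)
    (hdd3 : ∀ x : H2, d3 (d2 x) = 0) (hdd4 : ∀ x : H3, d4 (d3 x) = 0)
    (hdd5 : ∀ x : H4, d5 (d4 x) = 0) (hdd6 : ∀ x : H5, d6 (d5 x) = 0)
    (hdd7 : ∀ x : H6, d7 (d6 x) = 0)
    (hδδ1 : ∀ x : H2, δ1 (δ2 x) = 0) (hδδ2 : ∀ x : H3, δ2 (δ3 x) = 0)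
    (hδδ3 : ∀ x : H4, δ3 (δ4 x) = 0) (hδδ4 : ∀ x : H5, δ4 (δ5 x) = 0)
    (hδδ5 : ∀ x : H6, δ5 (δ6 x) = 0) (hδδ6 : ∀ x : H7, δ6 (δ7 x) = 0)
    (hδδ7 : ∀ x : H8, δ7 (δ8 x) = 0)
    (α1 : H1) (α3 : H3) (α5 : H5) (α7 : H7)
    (β0 : H0) (β2 : H2) (β4 : H4) (β6 : H6) (β8 : H8)
    -- (k-4) β_k = d α_{k-1} + δ α_{k+1} for even k (α_{-1} = α₉ = 0)
    (he0 : ((0 : ℝ) - 4) • β0 = δ1 α1)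
    (he2 : ((2 : ℝ) - 4) • β2 = d1 α1 + δ3 α3)
    (he4 : ((4 : ℝ) - 4) • β4 = d3 α3 + δ5 α5)
    (he6 : ((6 : ℝ) - 4) • β6 = d5 α5 + δ7 α7)
    (he8 : ((8 : ℝ) - 4) • β8 = d7 α7)
    -- (3-k) α_k = d β_{k-1} + δ β_{k+1} for odd k
    (ho1 : ((3 : ℝ) - 1) • α1 = d0 β0 + δ2 β2)
    (ho3 : ((3 : ℝ) - 3) • α3 = d2 β2 + δ4 β4)
    (ho5 : ((3 : ℝ) - 5) • α5 = d4 β4 + δ6 β6)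
    (ho7 : ((3 : ℝ) - 7) • α7 = d6 β6 + δ8 β8) :
    α1 = 0 ∧ α5 = 0 ∧ α7 = 0 ∧ β0 = 0 ∧ β2 = 0 ∧ β6 = 0 ∧ β8 = 0 ∧
    d3 α3 = 0 ∧ δ3 α3 = 0 ∧ d4 β4 = 0 ∧ δ4 β4 = 0 := by
  -- Step 1: α1 = 0
  have e13 : ⟪d1 α1, δ3 α3⟫ = 0 := by rw [← hadj2]; simp [hdd2]
  have h1 : ⟪d0 β0, α1⟫ = -4 * ⟪β0, β0⟫ := by
    rw [hadj0, ← he0, real_inner_smul_right]; ring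
  have h2 : ⟪δ2 β2, α1⟫ = -(1/2) * ⟪d1 α1, d1 α1⟫ := by
    have e2 : ((2:ℝ) - 4) * ⟪d1 α1, β2⟫ = ⟪d1 α1, d1 α1⟫ := by
      rw [← real_inner_smul_right, he2, inner_add_right, e13]; ring
    rw [real_inner_comm, ← hadj1]; linarith
  have key1 : 2 * ⟪α1, α1⟫ = -4 * ⟪β0, β0⟫ - (1/2) * ⟪d1 α1, d1 α1⟫ := by
    have := congrArg (fun z => ⟪z, α1⟫) ho1
    simp only [real_inner_smul_left, inner_add_left] at this
    rw [h1, h2] at this; linarith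
  have hα1 : α1 = 0 := by
    rw [← inner_self_eq_zero (𝕜 := ℝ)]
    have n0 := real_inner_self_nonneg (x := α1)
    have n1 := real_inner_self_nonneg (x := β0)
    have n2 := real_inner_self_nonneg (x := d1 α1)
    linarith
  have hβ0 : β0 = 0 := by
    have := he0; rw [hα1, map_zero] at this
    have h4 : ((0:ℝ) - 4) ≠ 0 := by norm_num
    exact (smul_eq_zero.mp this).resolve_left h4
  -- Step 2: α7 = 0
  have e57 : ⟪d5 α5, δ7 α7⟫ = 0 := by rw [← hadj6]; simp [hdd6]
  have h3 : ⟪δ8 β8, α7⟫ = 4 * ⟪β8, β8⟫ := by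
    rw [real_inner_comm, ← hadj7, ← he8, real_inner_smul_left]; norm_num
  have h4 : ⟪d6 β6, α7⟫ = (1/2) * ⟪δ7 α7, δ7 α7⟫ := by
    have e2 : (2:ℝ) * ⟪β6, δ7 α7⟫ = ⟪δ7 α7, δ7 α7⟫ := by
      have : ⟪((2:ℝ)) • β6, δ7 α7⟫ = ⟪d5 α5 + δ7 α7, δ7 α7⟫ := by
        rw [show ((2:ℝ)) • β6 = d5 α5 + δ7 α7 by linear_combination (norm := module) he6]
      rw [real_inner_smul_left, inner_add_left, e57] at this
      linarith
    rw [hadj6]; linarith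
  have key2 : -4 * ⟪α7, α7⟫ = (1/2) * ⟪δ7 α7, δ7 α7⟫ + 4 * ⟪β8, β8⟫ := by
    have := congrArg (fun z => ⟪z, α7⟫) ho7
    simp only [real_inner_smul_left, inner_add_left] at this
    rw [h3, h4] at this; linarith
  have hα7 : α7 = 0 := by
    rw [← inner_self_eq_zero (𝕜 := ℝ)]
    have n0 := real_inner_self_nonneg (x := α7)
    have n1 := real_inner_self_nonneg (x := β8)
    have n2 := real_inner_self_nonneg (x := δ7 α7)
    linarith
  have hβ8 : β8 = 0 := by
    have := he8; rw [hα7, map_zero] at this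
    have h4 : ((8:ℝ) - 4) ≠ 0 := by norm_num
    exact (smul_eq_zero.mp this).resolve_left h4
  -- Step 3: β2 = 0, δ4 β4 = 0, δ3 α3 = 0
  have hδ2β2 : δ2 β2 = 0 := by
    have := ho1; rw [hα1, hβ0, map_zero, smul_zero, zero_add] at this
    exact this.symm
  have hd2β2 : d2 β2 = 0 := by
    rw [← inner_self_eq_zero (𝕜 := ℝ)]
    have e : d2 β2 = -δ4 β4 := by
      have := ho3; rw [show ((3:ℝ) - 3) = 0 by norm_num, zero_smul] at this
      exact eq_neg_of_add_eq_zero_left this.symm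
    calc ⟪d2 β2, d2 β2⟫ = ⟪d2 β2, -δ4 β4⟫ := by rw [← e]
      _ = -⟪d3 (d2 β2), β4⟫ := by rw [inner_neg_right, hadj3]
      _ = 0 := by rw [hdd3]; simp
  have hδ4β4 : δ4 β4 = 0 := by
    have := ho3; rw [show ((3:ℝ) - 3) = 0 by norm_num, zero_smul, hd2β2, zero_add] at this
    exact this.symm
  have hβ2 : β2 = 0 := by
    rw [← inner_self_eq_zero (𝕜 := ℝ)]
    have e : ((2:ℝ) - 4) * ⟪β2, β2⟫ = ⟪β2, δ3 α3⟫ := by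
      rw [← real_inner_smul_left, he2, hα1, map_zero, zero_add]
      exact real_inner_comm _ _
    rw [← hadj2, hd2β2] at e
    simp only [inner_zero_left] at e
    linarith
  have hδ3α3 : δ3 α3 = 0 := by
    have := he2; rw [hα1, hβ2, map_zero, smul_zero, zero_add] at this
    exact this.symm
  -- Step 4: α5 = 0, β6 = 0
  have hδ5α5 : δ5 α5 = -d3 α3 := by
    have := he4; rw [show ((4:ℝ) - 4) = 0 by norm_num, zero_smul] at this
    exact eq_neg_of_add_eq_zero_right this.symm
  have h5 : ⟪d4 β4, α5⟫ = 0 := by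
    rw [hadj4, hδ5α5, inner_neg_right, real_inner_comm, hadj3, hδ4β4]
    simp
  have h6 : ⟪δ6 β6, α5⟫ = 2 * ⟪β6, β6⟫ := by
    have e : d5 α5 = ((6:ℝ) - 4) • β6 := by
      have := he6; rw [hα7, map_zero, add_zero] at this
      exact this.symm
    rw [real_inner_comm, ← hadj5, e, real_inner_smul_left]
    norm_num
  have key3 : -2 * ⟪α5, α5⟫ = 2 * ⟪β6, β6⟫ := by
    have := congrArg (fun z => ⟪z, α5⟫) ho5
    simp only [real_inner_smul_left, inner_add_left] at this
    rw [h5, h6] at this; linarith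
  have hα5 : α5 = 0 := by
    rw [← inner_self_eq_zero (𝕜 := ℝ)]
    have n0 := real_inner_self_nonneg (x := α5)
    have n1 := real_inner_self_nonneg (x := β6)
    linarith
  have hβ6 : β6 = 0 := by
    have h0 : (2:ℝ) * ⟪β6, β6⟫ = 0 := by rw [← key3, hα5]; simp
    rw [← inner_self_eq_zero (𝕜 := ℝ)]
    linarith
  have hd3α3 : d3 α3 = 0 := by
    rw [← neg_eq_zero, ← hδ5α5, hα5, map_zero]
  have hd4β4 : d4 β4 = 0 := by
    have := ho5; rw [hα5, hβ6, map_zero, add_zero, smul_zero] at this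
    exact this.symm
  exact ⟨hα1, hα5, hα7, hβ0, hβ2, hβ6, hβ8, hd3α3, hδ3α3, hd4β4, hδ4β4⟩
end

section
/- Let H₀, …, H₇ be real inner product spaces and d : H_k → H_{k+1}, δ : H_k → H_{k-1} linear maps (with H_{-1} = H₈ = {0}) satisfying ⟨d x, y⟩ = ⟨x, δ y⟩, d∘d = 0 and δ∘δ = 0. Suppose given α_k ∈ H_k for even k ∈ {0,2,4,6} and β_k ∈ H_k for odd k ∈ {1,3,5,7} (with α_{-2}, β_{-1}, β₉ etc. interpreted as 0) satisfying (k-3)β_k = d α_{k-1} + δ α_{k+1} for all odd k ∈ {1,…,7} and (4-k)α_k = d β_{k-1} + δ β_{k+1} for all even k ∈ {0,…,6}. Then α₀ = α₂ = α₆ = 0, β₁ = β₅ = β₇ = 0, and α₄, β₃ satisfy d α₄ = δ α₄ = 0 and d β₃ = δ β₃ = 0. -/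
open RealInnerProductSpace


private lemma inner_nonpos_zero {E : Type*} [NormedAddCommGroup E] [InnerProductSpace ℝ E]
    {x : E} (h : ⟪x, x⟫ ≤ 0) : x = 0 :=
  inner_self_eq_zero.mp (le_antisymm h real_inner_self_nonneg)

/-- Algebraic core of Lemma "odd-degree forms at rate -3": closed and coclosed
odd-degree forms homogeneous of rate -3 on a Spin(7)-cone.  `H_k` models `Ω^k(Σ)`,
`d` the exterior derivative, `δ` the codifferential (adjoint of `d`); the system
`(k-3)β_k = dα_{k-1} + δα_{k+1}` (k odd), `(4-k)α_k = dβ_{k-1} + δβ_{k+1}` (k even)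
expresses that the form is closed and coclosed.  Conclusion: everything vanishes
except `α₄`, `β₃`, which are closed and coclosed. -/
theorem stmt_9
    {H0 H1 H2 H3 H4 H5 H6 H7 : Type*}
    [NormedAddCommGroup H0] [InnerProductSpace ℝ H0]
    [NormedAddCommGroup H1] [InnerProductSpace ℝ H1]
    [NormedAddCommGroup H2] [InnerProductSpace ℝ H2]
    [NormedAddCommGroup H3] [InnerProductSpace ℝ H3]
    [NormedAddCommGroup H4] [InnerProductSpace ℝ H4]
    [NormedAddCommGroup H5] [InnerProductSpace ℝ H5]
    [NormedAddCommGroup H6] [InnerProductSpace ℝ H6]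
    [NormedAddCommGroup H7] [InnerProductSpace ℝ H7]
    (d0 : H0 →ₗ[ℝ] H1) (d1 : H1 →ₗ[ℝ] H2) (d2 : H2 →ₗ[ℝ] H3) (d3 : H3 →ₗ[ℝ] H4)
    (d4 : H4 →ₗ[ℝ] H5) (d5 : H5 →ₗ[ℝ] H6) (d6 : H6 →ₗ[ℝ] H7)
    (δ1 : H1 →ₗ[ℝ] H0) (δ2 : H2 →ₗ[ℝ] H1) (δ3 : H3 →ₗ[ℝ] H2) (δ4 : H4 →ₗ[ℝ] H3)
    (δ5 : H5 →ₗ[ℝ] H4) (δ6 : H6 →ₗ[ℝ] H5) (δ7 : H7 →ₗ[ℝ] H6)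
    (hadj0 : ∀ (x : H0) (y : H1), ⟪d0 x, y⟫ = ⟪x, δ1 y⟫)
    (hadj1 : ∀ (x : H1) (y : H2), ⟪d1 x, y⟫ = ⟪x, δ2 y⟫)
    (hadj2 : ∀ (x : H2) (y : H3), ⟪d2 x, y⟫ = ⟪x, δ3 y⟫)
    (hadj3 : ∀ (x : H3) (y : H4), ⟪d3 x, y⟫ = ⟪x, δ4 y⟫)
    (hadj4 : ∀ (x : H4) (y : H5), ⟪d4 x, y⟫ = ⟪x, δ5 y⟫)
    (hadj5 : ∀ (x : H5) (y : H6), ⟪d5 x, y⟫ = ⟪x, δ6 y⟫)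
    (hadj6 : ∀ (x : H6) (y : H7), ⟪d6 x, y⟫ = ⟪x, δ7 y⟫)
    (hdd1 : ∀ x : H0, d1 (d0 x) = 0) (hdd2 : ∀ x : H1, d2 (d1 x) = 0)
    (hdd3 : ∀ x : H2, d3 (d2 x) = 0) (hdd4 : ∀ x : H3, d4 (d3 x) = 0)
    (hdd5 : ∀ x : H4, d5 (d4 x) = 0) (hdd6 : ∀ x : H5, d6 (d5 x) = 0)
    (hδδ1 : ∀ x : H2, δ1 (δ2 x) = 0) (hδδ2 : ∀ x : H3, δ2 (δ3 x) = 0)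
    (hδδ3 : ∀ x : H4, δ3 (δ4 x) = 0) (hδδ4 : ∀ x : H5, δ4 (δ5 x) = 0)
    (hδδ5 : ∀ x : H6, δ5 (δ6 x) = 0) (hδδ6 : ∀ x : H7, δ6 (δ7 x) = 0)
    (α0 : H0) (α2 : H2) (α4 : H4) (α6 : H6)
    (β1 : H1) (β3 : H3) (β5 : H5) (β7 : H7)
    -- (k-3) β_k = d α_{k-1} + δ α_{k+1} for odd k (α₈ = 0)
    (ho1 : ((1 : ℝ) - 3) • β1 = d0 α0 + δ2 α2)
    (ho3 : ((3 : ℝ) - 3) • β3 = d2 α2 + δ4 α4)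
    (ho5 : ((5 : ℝ) - 3) • β5 = d4 α4 + δ6 α6)
    (ho7 : ((7 : ℝ) - 3) • β7 = d6 α6)
    -- (4-k) α_k = d β_{k-1} + δ β_{k+1} for even k (β_{-1} = 0)
    (he0 : ((4 : ℝ) - 0) • α0 = δ1 β1)
    (he2 : ((4 : ℝ) - 2) • α2 = d1 β1 + δ3 β3)
    (he4 : ((4 : ℝ) - 4) • α4 = d3 β3 + δ5 β5)
    (he6 : ((4 : ℝ) - 6) • α6 = d5 β5 + δ7 β7) :
    α0 = 0 ∧ α2 = 0 ∧ α6 = 0 ∧ β1 = 0 ∧ β5 = 0 ∧ β7 = 0 ∧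
    d4 α4 = 0 ∧ δ4 α4 = 0 ∧ d3 β3 = 0 ∧ δ3 β3 = 0 := by
  -- Step A : α0 = 0
  have hd0δ2 : ⟪d0 α0, δ2 α2⟫ = 0 := by
    rw [← hadj1, hdd1, inner_zero_left]
  have hA1 : ⟪d0 α0, ((1:ℝ) - 3) • β1⟫ = ⟪d0 α0, d0 α0 + δ2 α2⟫ := by rw [ho1]
  have hA2 : ⟪d0 α0, β1⟫ = ⟪α0, δ1 β1⟫ := hadj0 α0 β1
  have hA3 : ⟪α0, δ1 β1⟫ = 4 * ⟪α0, α0⟫ := by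
    rw [← he0, real_inner_smul_right]; ring
  rw [real_inner_smul_right, inner_add_right, hd0δ2, hA2, hA3] at hA1
  have hα0 : α0 = 0 := by
    refine inner_nonpos_zero ?_
    nlinarith [(real_inner_self_nonneg : (0:ℝ) ≤ ⟪d0 α0, d0 α0⟫)]
  rw [hα0, map_zero, zero_add] at ho1
  -- Step B : β1 = 0
  have hd1δ3 : ⟪d1 β1, δ3 β3⟫ = 0 := by
    rw [← hadj2, hdd2, inner_zero_left]
  have hB1 : ⟪d1 β1, ((4:ℝ) - 2) • α2⟫ = ⟪d1 β1, d1 β1 + δ3 β3⟫ := by rw [he2]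
  have hB2 : ⟪d1 β1, α2⟫ = -2 * ⟪β1, β1⟫ := by
    rw [hadj1, ← ho1, real_inner_smul_right]; ring
  rw [real_inner_smul_right, inner_add_right, hd1δ3, hB2] at hB1
  have hβ1 : β1 = 0 := by
    refine inner_nonpos_zero ?_
    nlinarith [(real_inner_self_nonneg : (0:ℝ) ≤ ⟪d1 β1, d1 β1⟫)]
  rw [hβ1, map_zero, zero_add] at he2
  rw [hβ1, smul_zero] at ho1
  -- Step D : β7 = 0
  have hd6α6 : d6 α6 = (4:ℝ) • β7 := by
    rw [← ho7]; norm_num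
  have hD1 : d6 (δ7 β7) = (-8 : ℝ) • β7 := by
    have := congrArg d6 he6
    rw [map_smul, map_add, hdd6, zero_add, hd6α6, smul_smul] at this
    rw [← this]; norm_num
  have hD2 : ⟪d6 (δ7 β7), β7⟫ = ⟪δ7 β7, δ7 β7⟫ := by
    rw [hadj6]
  rw [hD1, real_inner_smul_left] at hD2
  have hβ7 : β7 = 0 := by
    refine inner_nonpos_zero ?_
    nlinarith [(real_inner_self_nonneg : (0:ℝ) ≤ ⟪δ7 β7, δ7 β7⟫)]
  rw [hβ7, map_zero, add_zero] at he6
  rw [hβ7, smul_zero] at ho7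
  -- Step E : α6 = 0
  have hE1 : d5 (δ6 α6) = (-4 : ℝ) • α6 := by
    have := congrArg d5 ho5
    rw [map_smul, map_add, hdd5, zero_add, ← he6, smul_smul] at this
    rw [← this]; norm_num
  have hE2 : ⟪d5 (δ6 α6), α6⟫ = ⟪δ6 α6, δ6 α6⟫ := by rw [hadj5]
  rw [hE1, real_inner_smul_left] at hE2
  have hα6 : α6 = 0 := by
    refine inner_nonpos_zero ?_
    nlinarith [(real_inner_self_nonneg : (0:ℝ) ≤ ⟪δ6 α6, δ6 α6⟫)]
  rw [hα6, smul_zero] at he6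
  rw [hα6, map_zero, add_zero] at ho5
  -- Step F : d2 α2 = 0, δ4 α4 = 0, α2 = 0
  have ho3' : d2 α2 = - δ4 α4 := by
    have h : d2 α2 + δ4 α4 = 0 := by rw [← ho3]; norm_num
    exact eq_neg_of_add_eq_zero_left h
  have hF1 : δ3 (d2 α2) = 0 := by rw [ho3', map_neg, hδδ3, neg_zero]
  have hd2α2 : d2 α2 = 0 := by
    have : ⟪d2 α2, d2 α2⟫ = 0 := by rw [hadj2, hF1, inner_zero_right]
    exact inner_self_eq_zero.mp this
  have hδ4α4 : δ4 α4 = 0 := by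
    rw [hd2α2] at ho3'
    exact neg_eq_zero.mp ho3'.symm
  have hα2 : α2 = 0 := by
    have h2 : ⟪α2, ((4:ℝ) - 2) • α2⟫ = ⟪α2, δ3 β3⟫ := by rw [he2]
    rw [real_inner_smul_right, ← hadj2, hd2α2, inner_zero_left] at h2
    refine inner_nonpos_zero ?_
    linarith
  rw [hα2, smul_zero] at he2
  -- Step G : β5 = 0
  have hδ5β5 : δ5 β5 = - d3 β3 := by
    have h : δ5 β5 + d3 β3 = 0 := by rw [add_comm, ← he4]; norm_num
    exact eq_neg_of_add_eq_zero_left h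
  have hG1 : ⟪((5:ℝ) - 3) • β5, β5⟫ = ⟪d4 α4, β5⟫ := by rw [ho5]
  have hG2 : ⟪d4 α4, β5⟫ = 0 := by
    rw [hadj4, hδ5β5, inner_neg_right, real_inner_comm, hadj3, hδ4α4,
      inner_zero_right, neg_zero]
  rw [real_inner_smul_left, hG2] at hG1
  have hβ5 : β5 = 0 := by
    refine inner_nonpos_zero ?_; linarith
  rw [hβ5, smul_zero] at ho5
  have hd3β3 : d3 β3 = 0 := by
    rw [hβ5, map_zero] at hδ5β5
    exact neg_eq_zero.mp hδ5β5.symm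
  exact ⟨hα0, hα2, hα6, hβ1, hβ5, hβ7, ho5.symm, hδ4α4, hd3β3, he2.symm⟩
end
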